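/- arXiv:1607.06418 — 7 statements merged into one kernel-verified Lean document; each statement's English description precedes it below -/
import Mathlib

section
/- The quaternion group Q8 of order 8 does not have a basis: there is no finite sequence (b_1,…,b_n) of non-identity elements of Q8 such that every element of Q8 is written uniquely as b_1^{a_1}···b_n^{a_n} with each a_i ∈ {0,…,ord(b_i)−1}. -/
/-!
In a basis, exponent vectors supported on a single coordinate are mapped injectively, so the
cyclic subgroups generated by two different basis elements meet trivially. In `Q₈` every
nontrivial cyclic subgroup contains `-1`, so a basis has at most one element; but then `Q₈`
would be cyclic, and it is not (its exponent is `4`).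
-/

/-- A sequence `b : Fin n → G` of non-identity elements is a *basis* for the group `G`
if every `g ∈ G` is uniquely of the form `b 0 ^ a 0 * ⋯ * b (n-1) ^ a (n-1)`
with `a i ∈ {0, …, orderOf (b i) - 1}`. -/
def IsGroupBasis {G : Type*} [Group G] {n : ℕ} (b : Fin n → G) : Prop :=
  (∀ i, b i ≠ 1) ∧
    Function.Bijective (fun a : ∀ i, Fin (orderOf (b i)) =>
      (List.ofFn fun i => b i ^ ((a i : ℕ))).prod)

/-- `G` has a basis. -/
def HasGroupBasis (G : Type*) [Group G] : Prop :=
  ∃ (n : ℕ) (b : Fin n → G), IsGroupBasis b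

open Subgroup

theorem List.prod_ofFn_eq_of_forall_ne_eq_one {M : Type*} [Monoid M] {n : ℕ} {f : Fin n → M}
    (i : Fin n) (hf : ∀ j, j ≠ i → f j = 1) : (List.ofFn f).prod = f i := by
  induction n with
  | zero => exact i.elim0
  | succ n ih =>
    rw [List.ofFn_succ, List.prod_cons]
    induction i using Fin.cases with
    | zero =>
      rw [List.prod_eq_one, mul_one]
      simpa [List.mem_ofFn] using fun j => hf j.succ (Fin.succ_ne_zero j)
    | succ i =>
      rw [hf 0 (Fin.succ_ne_zero i).symm, one_mul,
        ih i fun j hj => hf j.succ (Fin.succ_injective _ |>.ne hj)]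

namespace IsGroupBasis

variable {G : Type*} [Group G] {n : ℕ} {b : Fin n → G}

theorem orderOf_pos (hb : IsGroupBasis b) (i : Fin n) : 0 < orderOf (b i) :=
  (hb.2.2 1).choose i |>.pos

theorem disjoint_zpowers (hb : IsGroupBasis b) {i j : Fin n} (hij : i ≠ j) :
    Disjoint (zpowers (b i)) (zpowers (b j)) := by
  classical
  let single (i : Fin n) (k : Fin (orderOf (b i))) : ∀ j, Fin (orderOf (b j)) :=
    Function.update (fun j => ⟨0, hb.orderOf_pos j⟩) i k
  have prod_single (i : Fin n) (k : Fin (orderOf (b i))) :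
      (List.ofFn fun j => b j ^ (single i k j : ℕ)).prod = b i ^ (k : ℕ) := by
    rw [List.prod_ofFn_eq_of_forall_ne_eq_one i fun j hj => by simp [single, hj]]
    simp [single]
  have exists_pow {x : G} (i : Fin n) (hx : x ∈ zpowers (b i)) :
      ∃ k : Fin (orderOf (b i)), b i ^ (k : ℕ) = x := by
    obtain ⟨k, hk, rfl⟩ := Finset.mem_image.mp
      ((orderOf_pos_iff.mp (hb.orderOf_pos i)).mem_zpowers_iff_mem_range_orderOf.mp hx)
    exact ⟨⟨k, Finset.mem_range.mp hk⟩, rfl⟩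
  refine disjoint_def.mpr fun {x} hxi hxj => ?_
  obtain ⟨k, rfl⟩ := exists_pow i hxi
  obtain ⟨l, hl⟩ := exists_pow j hxj
  have h := congrFun (hb.2.1 ((prod_single i k).trans (hl.symm.trans (prod_single j l).symm))) i
  simp only [single, Function.update_self, Function.update_of_ne hij] at h
  simp [h]

theorem isCyclic_of_lt_two (hb : IsGroupBasis b) (hn : n < 2) : IsCyclic G := by
  obtain rfl | rfl : n = 0 ∨ n = 1 := by omega
  · have : Subsingleton G := ⟨fun x y => by
      obtain ⟨_, rfl⟩ := hb.2.2 x; obtain ⟨_, rfl⟩ := hb.2.2 y; simp⟩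
    infer_instance
  · refine ⟨b 0, fun x => ?_⟩
    obtain ⟨a, rfl⟩ := hb.2.2 x
    simp only [List.ofFn_succ, List.ofFn_zero, List.prod_cons, List.prod_nil, mul_one]
    exact npow_mem_zpowers _ _

end IsGroupBasis

namespace QuaternionGroup

theorem not_isCyclic_two : ¬ IsCyclic (QuaternionGroup 2) := fun _ => by
  have := IsCyclic.exponent_eq_card (α := QuaternionGroup 2)
  rw [exponent, Nat.card_eq_fintype_card, card] at this
  norm_num at this

/-- `a 2` is the central element `-1`, the only involution of `Q₈`. -/
theorem a_two_mem_zpowers {x : QuaternionGroup 2} (hx : x ≠ 1) : a 2 ∈ zpowers x := by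
  obtain rfl | hsq : x = a 2 ∨ x ^ 2 = a 2 := by revert x; decide
  · exact mem_zpowers _
  · exact hsq ▸ npow_mem_zpowers x 2

end QuaternionGroup

/-- The quaternion group `Q₈` does not have a basis. -/
theorem quaternionGroup_not_hasGroupBasis : ¬ HasGroupBasis (QuaternionGroup 2) := by
  rintro ⟨n, b, hb⟩
  obtain hn | hn := lt_or_ge n 2
  · exact QuaternionGroup.not_isCyclic_two (hb.isCyclic_of_lt_two hn)
  · have h01 : (⟨0, by omega⟩ : Fin n) ≠ ⟨1, by omega⟩ := by simp
    have h_one := disjoint_def.mp (hb.disjoint_zpowers h01)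
      (QuaternionGroup.a_two_mem_zpowers (hb.1 _)) (QuaternionGroup.a_two_mem_zpowers (hb.1 _))
    exact absurd h_one (by decide)
end

section
/- Let G be a finite group and H a subgroup of G with a basis (h_1,…,h_m). Suppose there exist elements b_1,…,b_n ∈ G \ H such that for all x = b_1^{c_1}···b_n^{c_n} and y = b_1^{k_1}···b_n^{k_n} with c_i, k_i ∈ {0,…,ord(b_i)−1}: (1) x = y if and only if (c_1,…,c_n) = (k_1,…,k_n); (2) x·y⁻¹ ∈ H if and only if x = y; and (3) the index [G : H] equals ord(b_1)···ord(b_n). Then (h_1,…,h_m,b_1,…,b_n) is a basis for G. -/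
/-- Lemma: if `H ≤ G` has a basis `(h 0, …, h (m-1))` and `b 0, …, b (n-1) ∈ G \ H`
satisfy (1) products `b 0 ^ c 0 * ⋯ * b (n-1) ^ c (n-1)` are distinct for distinct
exponent tuples, (2) two such products are congruent mod `H` only if they are equal,
and (3) `[G : H] = orderOf (b 0) * ⋯ * orderOf (b (n-1))`, then
`(h 0, …, h (m-1), b 0, …, b (n-1))` is a basis for `G`. -/
theorem isGroupBasis_append {G : Type*} [Group G] [Finite G] (H : Subgroup G)
    {m : ℕ} (h : Fin m → H) (hh : IsGroupBasis h)
    {n : ℕ} (b : Fin n → G) (hbH : ∀ i, b i ∉ H)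
    (h1 : ∀ c k : ∀ i, Fin (orderOf (b i)),
      (List.ofFn fun i => b i ^ ((c i : ℕ))).prod =
        (List.ofFn fun i => b i ^ ((k i : ℕ))).prod ↔ c = k)
    (h2 : ∀ c k : ∀ i, Fin (orderOf (b i)),
      (List.ofFn fun i => b i ^ ((c i : ℕ))).prod *
          ((List.ofFn fun i => b i ^ ((k i : ℕ))).prod)⁻¹ ∈ H ↔
        (List.ofFn fun i => b i ^ ((c i : ℕ))).prod =
          (List.ofFn fun i => b i ^ ((k i : ℕ))).prod)
    (h3 : H.index = ∏ i, orderOf (b i)) :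
    IsGroupBasis (Fin.append (fun i => (h i : G)) b) := by
  set F := Fin.append (fun i => (h i : G)) b with hF
  have hord1 : ∀ i : Fin m, orderOf (F (Fin.castAdd n i)) = orderOf (h i) := by
    intro i; rw [hF, Fin.append_left]; exact Subgroup.orderOf_coe _
  have hord2 : ∀ j : Fin n, orderOf (F (Fin.natAdd m j)) = orderOf (b j) := by
    intro j; rw [hF, Fin.append_right]
  -- exponent decompositions
  set d : (∀ i, Fin (orderOf (F i))) → ∀ i : Fin m, Fin (orderOf (h i)) :=
    fun a i => Fin.cast (hord1 i) (a (Fin.castAdd n i)) with hd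
  set c : (∀ i, Fin (orderOf (F i))) → ∀ j : Fin n, Fin (orderOf (b j)) :=
    fun a j => Fin.cast (hord2 j) (a (Fin.natAdd m j)) with hc
  have key : ∀ a : ∀ i, Fin (orderOf (F i)),
      (List.ofFn fun i => F i ^ ((a i : ℕ))).prod =
        (((List.ofFn fun i => h i ^ ((d a i : ℕ))).prod : H) : G) *
          (List.ofFn fun j => b j ^ ((c a j : ℕ))).prod := by
    intro a
    rw [List.ofFn_add, List.prod_append]
    congr 1
    · simp only [SubmonoidClass.coe_list_prod, List.map_ofFn, Function.comp_def,
        SubgroupClass.coe_pow, hd, Fin.coe_cast]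
      exact congrArg List.prod (congrArg List.ofFn (funext fun i =>
        congrArg (fun g : G => g ^ ((a (Fin.castAdd n i) : ℕ)))
          (by rw [hF]; exact Fin.append_left _ _ i)))
    · refine congrArg List.prod (congrArg List.ofFn (funext fun j => ?_))
      have hcv : ((c a j : ℕ)) = ((a (Fin.natAdd m j) : ℕ)) := by simp [hc]
      rw [hcv]
      exact congrArg (fun g : G => g ^ ((a (Fin.natAdd m j) : ℕ)))
        (by rw [hF]; exact Fin.append_right _ _ j)
  constructor
  · intro i
    refine Fin.addCases (motive := fun i => F i ≠ 1) ?_ ?_ i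
    · intro i
      rw [hF, Fin.append_left]
      simpa using hh.1 i
    · intro j
      rw [hF, Fin.append_right]
      intro hj
      exact hbH j (hj ▸ H.one_mem)
  · rw [Nat.bijective_iff_injective_and_card]
    constructor
    · intro a a' hprod
      simp only [key] at hprod
      have hmem : (List.ofFn fun j => b j ^ ((c a j : ℕ))).prod *
          ((List.ofFn fun j => b j ^ ((c a' j : ℕ))).prod)⁻¹ ∈ H := by
        have : (List.ofFn fun j => b j ^ ((c a j : ℕ))).prod *
            ((List.ofFn fun j => b j ^ ((c a' j : ℕ))).prod)⁻¹ =
            (((List.ofFn fun i => h i ^ ((d a i : ℕ))).prod : H) : G)⁻¹ *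
              (((List.ofFn fun i => h i ^ ((d a' i : ℕ))).prod : H) : G) := by
          rw [eq_inv_mul_iff_mul_eq, ← mul_assoc, mul_inv_eq_iff_eq_mul] at *
          rw [hprod]
        rw [this, ← Subgroup.coe_inv, ← Subgroup.coe_mul]
        exact SetLike.coe_mem _
      have hceq : c a = c a' := (h1 _ _).mp ((h2 _ _).mp hmem)
      have hPeq : (List.ofFn fun i => h i ^ ((d a i : ℕ))).prod =
          (List.ofFn fun i => h i ^ ((d a' i : ℕ))).prod := by
        rw [hceq] at hprod
        exact_mod_cast mul_right_cancel hprod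
      have hdeq : d a = d a' := hh.2.1 hPeq
      funext i
      refine Fin.addCases (motive := fun i => a i = a' i) ?_ ?_ i
      · intro i
        have := congrFun hdeq i
        simp only [hd] at this
        exact Fin.ext (by simpa using congrArg Fin.val this)
      · intro j
        have := congrFun hceq j
        simp only [hc] at this
        exact Fin.ext (by simpa using congrArg Fin.val this)
    · have hcardH : (∏ i, orderOf (h i)) = Nat.card H := by
        have := Nat.card_eq_of_bijective _ hh.2
        simpa [Nat.card_pi] using this
      have : Nat.card (∀ i, Fin (orderOf (F i))) = ∏ i, orderOf (F i) := by
        simp [Nat.card_pi]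
      rw [this, Fin.prod_univ_add]
      simp only [hord1, hord2]
      rw [hcardH, ← h3, Subgroup.card_mul_index]
end

section
/- Let H and K be finite groups that each have a basis, and let φ : H → Aut(K) be a group homomorphism. Then the semidirect product G = K ⋊_φ H has a basis. -/
/-!
Bases of `K` and of `H` concatenate to a basis of `K ⋊[φ] H`: every element is uniquely
`inl k * inr h`, so exponent vectors of the concatenation split into an exponent vector
for `K` followed by one for `H`, and the product of the concatenated powers is
`inl (∏ powers in K) * inr (∏ powers in H)`.
-/

open Function Set

section

variable {G G' K H : Type*} [Group G] [Group G'] [Group K] [Group H] {m n : ℕ}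

def finProdPow (b : Fin n → G) (e : Fin n → ℕ) : G :=
  (List.ofFn fun i => b i ^ e i).prod

theorem finProdPow_append (u : Fin m → G) (v : Fin n → G) (e₁ : Fin m → ℕ) (e₂ : Fin n → ℕ) :
    finProdPow (Fin.append u v) (Fin.append e₁ e₂) = finProdPow u e₁ * finProdPow v e₂ := by
  simp [finProdPow, List.ofFn_add]

theorem map_finProdPow (f : G →* G') (b : Fin n → G) (e : Fin n → ℕ) :
    f (finProdPow b e) = finProdPow (fun i => f (b i)) e := by
  simp [finProdPow, map_list_prod, List.map_ofFn, Function.comp_def]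

theorem range_finVal_pi (k : Fin n → ℕ) :
    range (fun (a : ∀ i, Fin (k i)) i => (a i : ℕ)) = univ.pi fun i => Iio (k i) := by
  ext e
  refine ⟨?_, fun he => ⟨fun i => ⟨e i, he i trivial⟩, rfl⟩⟩
  rintro ⟨a, rfl⟩ i -
  exact (a i).isLt

/-- Exponent vectors as plain `ℕ`-valued tuples in a box, so that concatenating bases needs
no casts between the types `Fin (orderOf _)`. -/
theorem isGroupBasis_iff_bijOn (b : Fin n → G) :
    IsGroupBasis b ↔
      (∀ i, b i ≠ 1) ∧ BijOn (finProdPow b) (univ.pi fun i => Iio (orderOf (b i))) univ := by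
  have hval : Injective fun (a : ∀ i, Fin (orderOf (b i))) i => (a i : ℕ) :=
    fun a a' h => funext fun i => Fin.ext (congrFun h i)
  rw [IsGroupBasis, ← range_finVal_pi, ← image_univ, ← bijOn_comp_iff hval.injOn, bijOn_univ]
  rfl

theorem IsGroupBasis.append_of_bijective_mul (f : K →* G) (g : H →* G)
    (hfg : Bijective fun p : K × H => f p.1 * g p.2) {u : Fin m → K} {v : Fin n → H}
    (hu : IsGroupBasis u) (hv : IsGroupBasis v) :
    IsGroupBasis (Fin.append (fun i => f (u i)) (fun j => g (v j))) := by
  rw [isGroupBasis_iff_bijOn] at hu hv ⊢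
  have hf : Injective f := fun x x' hx => congrArg Prod.fst (@hfg.1 (x, 1) (x', 1) (by simp [hx]))
  have hg : Injective g := fun y y' hy => congrArg Prod.snd (@hfg.1 (1, y) (1, y') (by simp [hy]))
  refine ⟨(Fin.forall_fin_add _).2 ⟨fun i => ?_, fun j => ?_⟩, ?_⟩
  · rw [Fin.append_left]; exact (map_ne_one_iff f hf).2 (hu.1 i)
  · rw [Fin.append_right]; exact (map_ne_one_iff g hg).2 (hv.1 j)
  have hbox : Fin.appendEquiv m n '' ((univ.pi fun i => Iio (orderOf (u i))) ×ˢ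
      (univ.pi fun j => Iio (orderOf (v j)))) =
      univ.pi fun i => Iio (orderOf (Fin.append (fun i => f (u i)) (fun j => g (v j)) i)) := by
    rw [(Fin.appendEquiv m n).image_eq_preimage_symm]
    ext e
    simp [Fin.forall_fin_add, orderOf_injective f hf, orderOf_injective g hg]
  have hsplit :
      finProdPow (Fin.append (fun i => f (u i)) (fun j => g (v j))) ∘ Fin.appendEquiv m n =
      (fun p : K × H => f p.1 * g p.2) ∘ Prod.map (finProdPow u) (finProdPow v) := by
    funext ⟨e₁, e₂⟩
    simp only [comp_apply, Prod.map_apply, map_finProdPow]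
    exact finProdPow_append ..
  rw [← hbox, ← bijOn_comp_iff (Fin.appendEquiv m n).injective.injOn, hsplit]
  exact hfg.bijOn_univ.comp (univ_prod_univ ▸ hu.2.prodMap hv.2)

end

theorem SemidirectProduct.inl_mul_inr_bijective {N G : Type*} [Group N] [Group G]
    (φ : G →* MulAut N) : Bijective fun p : N × G => (inl p.1 * inr p.2 : N ⋊[φ] G) := by
  convert (equivProd (φ := φ)).symm.bijective with p
  exact (mk_eq_inl_mul_inr p.2 p.1).symm

theorem semidirectProduct_hasGroupBasis_general {H K : Type*} [Group H] [Group K]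
    (φ : H →* MulAut K)
    (hH : HasGroupBasis H) (hK : HasGroupBasis K) :
    HasGroupBasis (K ⋊[φ] H) := by
  obtain ⟨n, bH, hbH⟩ := hH
  obtain ⟨m, bK, hbK⟩ := hK
  exact ⟨m + n, _, hbK.append_of_bijective_mul _ _
    (SemidirectProduct.inl_mul_inr_bijective φ) hbH⟩

/-- If the finite groups `H` and `K` both have bases and `φ : H →* Aut K`,
then the semidirect product `K ⋊[φ] H` has a basis. -/
theorem semidirectProduct_hasGroupBasis {H K : Type*} [Group H] [Group K]
    [Finite H] [Finite K] (φ : H →* MulAut K)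
    (hH : HasGroupBasis H) (hK : HasGroupBasis K) :
    HasGroupBasis (K ⋊[φ] H) :=
  semidirectProduct_hasGroupBasis_general φ hH hK
end

section
/- Every finite group isomorphic to a semidirect product A ⋊_φ B, where A and B are finite abelian groups and φ : B → Aut(A) is a group homomorphism, has a basis. -/
/-!
A finite abelian group is a product of cyclic groups, and a finite cyclic group has a basis
consisting of one generator (or the empty basis if it is trivial). If `G` contains injective
images of `A` and `B` such that every element of `G` is uniquely `f a * g b`, then a basis of `A`
followed by a basis of `B` is a basis of `G`. This applies to `A × B`, which makes bases of
finite products out of bases of the factors, and to `A ⋊[φ] B`.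
-/

open Function

theorem map_prod_ofFn_pow {M N F : Type*} [Monoid M] [Monoid N] [FunLike F M N]
    [MonoidHomClass F M N] (f : F) {n : ℕ} (b : Fin n → M) (a : Fin n → ℕ) :
    f (List.ofFn fun i => b i ^ a i).prod = (List.ofFn fun i => f (b i) ^ a i).prod := by
  simp [map_list_prod, List.map_ofFn, comp_def]

section

variable {G : Type*} [Group G]

theorem isGroupBasis_iff_existsUnique {n : ℕ} (b : Fin n → G) :
    IsGroupBasis b ↔ (∀ i, b i ≠ 1) ∧ ∀ g : G, ∃! a : Fin n → ℕ,
      (∀ i, a i < orderOf (b i)) ∧ (List.ofFn fun i => b i ^ a i).prod = g := by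
  refine and_congr_right fun _ => ?_
  rw [bijective_iff_existsUnique]
  refine forall_congr' fun g => ⟨fun ⟨a, ha, huniq⟩ => ?_, fun ⟨a, ⟨hlt, ha⟩, huniq⟩ => ?_⟩
  · refine ⟨fun i => a i, ⟨fun i => (a i).is_lt, ha⟩, fun a' ⟨hlt', ha'⟩ => funext fun i => ?_⟩
    exact congrArg Fin.val (congrFun (huniq (fun i => ⟨a' i, hlt' i⟩) ha') i)
  · refine ⟨fun i => ⟨a i, hlt i⟩, ha, fun a' ha' => funext fun i => Fin.ext ?_⟩
    exact congrFun (huniq (fun i => a' i) ⟨fun i => (a' i).is_lt, ha'⟩) i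

theorem HasGroupBasis.of_mulEquiv {H : Type*} [Group H] (e : G ≃* H) :
    HasGroupBasis H → HasGroupBasis G := by
  rintro ⟨n, b, hb⟩
  rw [isGroupBasis_iff_existsUnique] at hb
  refine ⟨n, fun i => e.symm (b i), (isGroupBasis_iff_existsUnique _).2
    ⟨fun i => by simpa using hb.1 i, fun g => ?_⟩⟩
  simpa only [MulEquiv.orderOf_eq, ← map_prod_ofFn_pow e.symm, e.symm_apply_eq] using hb.2 (e g)

theorem hasGroupBasis_of_subsingleton [Subsingleton G] : HasGroupBasis G :=
  ⟨0, Fin.elim0, fun i => i.elim0, fun _ _ _ => Subsingleton.elim _ _,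
    fun _ => ⟨fun i => i.elim0, Subsingleton.elim _ _⟩⟩

theorem IsCyclic.hasGroupBasis [Finite G] [IsCyclic G] : HasGroupBasis G := by
  obtain ⟨x, hx⟩ := IsCyclic.exists_generator (α := G)
  rcases eq_or_ne x 1 with rfl | hx1
  · have : Subsingleton G := ⟨fun g h => by
      have hg := hx g
      have hh := hx h
      rw [Subgroup.zpowers_one_eq_bot, Subgroup.mem_bot] at hg hh
      rw [hg, hh]⟩
    exact hasGroupBasis_of_subsingleton
  refine ⟨1, fun _ => x, (isGroupBasis_iff_existsUnique _).2 ⟨fun _ => hx1, fun g => ?_⟩⟩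
  simp only [List.ofFn_succ, List.ofFn_zero, List.prod_cons, List.prod_nil, mul_one,
    Fin.forall_fin_one]
  obtain ⟨m, hm, rfl⟩ : ∃ m < orderOf x, x ^ m = g := by
    classical
    simpa using mem_zpowers_iff_mem_range_orderOf.1 (hx g)
  refine ⟨fun _ => m, ⟨hm, rfl⟩, fun a ⟨ha, hag⟩ => funext fun i => ?_⟩
  rw [Fin.fin_one_eq_zero i]
  exact pow_injOn_Iio_orderOf ha hm hag

variable {A B : Type*} [Group A] [Group B]

theorem IsGroupBasis.append {m k : ℕ} {b : Fin m → A} {c : Fin k → B} (hb : IsGroupBasis b)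
    (hc : IsGroupBasis c) (f : A →* G) (g : B →* G) (hf : Injective f) (hg : Injective g)
    (hfg : Bijective fun p : A × B => f p.1 * g p.2) :
    IsGroupBasis (Fin.append (f ∘ b) (g ∘ c)) := by
  rw [isGroupBasis_iff_existsUnique] at hb hc ⊢
  have hprod : ∀ a : Fin (m + k) → ℕ,
      (List.ofFn fun i => Fin.append (f ∘ b) (g ∘ c) i ^ a i).prod =
        f (List.ofFn fun i => b i ^ a (Fin.castAdd k i)).prod *
          g (List.ofFn fun j => c j ^ a (Fin.natAdd m j)).prod := by
    intro a
    rw [List.ofFn_add, List.prod_append, map_prod_ofFn_pow, map_prod_ofFn_pow]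
    simp [Fin.castAdd]
  have hlt : ∀ a : Fin (m + k) → ℕ,
      (∀ i, a i < orderOf (Fin.append (f ∘ b) (g ∘ c) i)) ↔
        (∀ i, a (Fin.castAdd k i) < orderOf (b i)) ∧ ∀ j, a (Fin.natAdd m j) < orderOf (c j) := by
    intro a
    simp [Fin.forall_fin_add, orderOf_injective f hf, orderOf_injective g hg]
  refine ⟨(Fin.forall_fin_add _).2 ⟨fun i => ?_, fun j => ?_⟩, fun x => ?_⟩
  · simpa using (map_ne_one_iff f hf).2 (hb.1 i)
  · simpa using (map_ne_one_iff g hg).2 (hc.1 j)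
  obtain ⟨⟨y, z⟩, rfl⟩ := hfg.2 x
  obtain ⟨a, ha, huniq⟩ := hb.2 y
  obtain ⟨a', ha', huniq'⟩ := hc.2 z
  refine ⟨Fin.append a a', ?_, fun e ⟨he_lt, he⟩ => ?_⟩
  · refine ⟨(hlt _).2 ⟨?_, ?_⟩, ?_⟩ <;> simp [hprod, ha, ha']
  rw [hlt] at he_lt
  rw [hprod] at he
  obtain ⟨hy, hz⟩ := Prod.mk.inj (hfg.1 he)
  rw [← Fin.append_castAdd_natAdd (f := e), huniq _ ⟨he_lt.1, hy⟩, huniq' _ ⟨he_lt.2, hz⟩]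

theorem HasGroupBasis.of_bijective_mul (hA : HasGroupBasis A) (hB : HasGroupBasis B)
    (f : A →* G) (g : B →* G) (hf : Injective f) (hg : Injective g)
    (hfg : Bijective fun p : A × B => f p.1 * g p.2) : HasGroupBasis G := by
  obtain ⟨m, b, hb⟩ := hA
  obtain ⟨k, c, hc⟩ := hB
  exact ⟨m + k, _, hb.append hc f g hf hg hfg⟩

theorem HasGroupBasis.prod (hA : HasGroupBasis A) (hB : HasGroupBasis B) :
    HasGroupBasis (A × B) := by
  refine hA.of_bijective_mul hB (.inl A B) (.inr A B) (Prod.mk_left_injective 1)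
    (Prod.mk_right_injective 1) ?_
  convert bijective_id
  simp

open SemidirectProduct in
theorem HasGroupBasis.semidirectProduct (φ : B →* MulAut A) (hA : HasGroupBasis A)
    (hB : HasGroupBasis B) : HasGroupBasis (A ⋊[φ] B) :=
  hA.of_bijective_mul hB inl inr inl_injective inr_injective <|
    bijective_iff_has_inverse.2
      ⟨fun x => (x.left, x.right), fun p => by simp, inl_left_mul_inr_right⟩

end

theorem HasGroupBasis.pi_fin {k : ℕ} {G : Fin k → Type*} [∀ i, Group (G i)]
    (h : ∀ i, HasGroupBasis (G i)) : HasGroupBasis (∀ i, G i) := by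
  induction k with
  | zero => exact hasGroupBasis_of_subsingleton
  | succ k ih =>
    exact ((h 0).prod (ih fun i => h i.succ)).of_mulEquiv
      { (Fin.consEquiv G).symm with map_mul' := fun _ _ => rfl }

theorem HasGroupBasis.pi {ι : Type*} [Finite ι] {G : ι → Type*} [∀ i, Group (G i)]
    (h : ∀ i, HasGroupBasis (G i)) : HasGroupBasis (∀ i, G i) := by
  obtain ⟨k, ⟨e⟩⟩ := Finite.exists_equiv_fin ι
  exact (pi_fin fun j => h (e.symm j)).of_mulEquiv
    { Equiv.piCongrLeft' G e with map_mul' := fun _ _ => rfl }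

theorem CommGroup.hasGroupBasis (A : Type*) [CommGroup A] [Finite A] : HasGroupBasis A := by
  obtain ⟨ι, _, n, hn, ⟨e⟩⟩ := CommGroup.equiv_prod_multiplicative_zmod_of_finite A
  have : ∀ i, NeZero (n i) := fun i => ⟨(zero_lt_one.trans (hn i)).ne'⟩
  exact (HasGroupBasis.pi fun _ => IsCyclic.hasGroupBasis).of_mulEquiv e

/-- Every finite group isomorphic to a semidirect product `A ⋊[φ] B` of finite
abelian groups `A` and `B` has a basis. -/
theorem hasGroupBasis_of_mulEquiv_semidirectProduct
    {A B G : Type*} [CommGroup A] [CommGroup B] [Finite A] [Finite B] [Group G]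
    (φ : B →* MulAut A) (e : G ≃* A ⋊[φ] B) :
    HasGroupBasis G :=
  ((CommGroup.hasGroupBasis A).semidirectProduct φ (CommGroup.hasGroupBasis B)).of_mulEquiv e
end

section
/- Let m be an odd cube-free positive integer, i.e., m is odd and no prime cube divides m. If G is a finite group of order 2m, then G has a basis. -/
/-!
Induct on `|G|`. Let `p` be the smallest prime divisor of `|G|` and `P` a Sylow `p`-subgroup.
Cube-freeness and `4 ∤ |G|` give `|P| ∈ {p, p²}` and `|P| ≠ 4`, so `P` is abelian and has a basis
(it is cyclic or the internal direct product of two cyclic groups of order `p`). An automorphism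
of `P` of prime order `q > p` fixes a proper subgroup of order `p ^ j`, and counting orbits gives
`q ∣ p ^ (k - j) - 1` where `|P| = p ^ k`, which forces `p = 2` and `|P| = 4`. Hence
`N_G(P) = C_G(P)`, and Burnside's transfer theorem gives `P` a normal complement `K`. The group
`K` inherits both hypotheses, and the bases of `K` and `P` concatenate to a basis of `G`.
-/

open Subgroup

namespace HasGroupBasis

theorem of_subsingleton (G : Type*) [Group G] [Subsingleton G] : HasGroupBasis G :=
  ⟨0, Fin.elim0, Fin.rec0, ⟨fun _ _ _ => funext Fin.rec0,
    fun _ => ⟨Fin.rec0, Subsingleton.elim _ _⟩⟩⟩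

theorem of_isCyclic (G : Type*) [Group G] [Finite G] [IsCyclic G] : HasGroupBasis G := by
  rcases subsingleton_or_nontrivial G with _ | _
  · exact of_subsingleton G
  obtain ⟨g, hg⟩ := IsCyclic.exists_generator (α := G)
  have hg1 : g ≠ 1 := by
    rintro rfl
    obtain ⟨x, hx⟩ := exists_ne (1 : G)
    exact hx (by simpa using hg x)
  refine ⟨1, fun _ => g, fun _ => hg1, ?_⟩
  convert ((Equiv.funUnique (Fin 1) _).trans ((finEquivZPowers (isOfFinOrder_of_finite g)).trans
    (Equiv.subtypeUnivEquiv hg))).bijective using 1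
  funext a
  simp [List.ofFn_succ, finEquivZPowers_apply]

theorem of_isComplement' {G : Type*} [Group G] {H K : Subgroup G} (hHK : H.IsComplement' K)
    (hH : HasGroupBasis H) (hK : HasGroupBasis K) : HasGroupBasis G := by
  obtain ⟨n, b, hb1, hb⟩ := hH
  obtain ⟨m, c, hc1, hc⟩ := hK
  let d : Fin (n + m) → G := Fin.append (fun i => (b i : G)) (fun j => (c j : G))
  have hdb (i : Fin n) : orderOf (b i) = orderOf (d (Fin.castAdd m i)) := by
    simp [d]
  have hdc (j : Fin m) : orderOf (c j) = orderOf (d (Fin.natAdd n j)) := by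
    simp [d]
  let E : (∀ i, Fin (orderOf (b i))) × (∀ j, Fin (orderOf (c j))) ≃
      ∀ k, Fin (orderOf (d k)) :=
    ((Equiv.piCongrRight fun i => finCongr (hdb i)).prodCongr
      (Equiv.piCongrRight fun j => finCongr (hdc j))).trans
      ((Equiv.sumPiEquivProdPi fun s => Fin (orderOf (d (finSumFinEquiv s)))).symm.trans
        (Equiv.piCongrLeft (fun k => Fin (orderOf (d k))) finSumFinEquiv))
  have hE (x) : (List.ofFn fun k => d k ^ (E x k : ℕ)).prod =
      (List.ofFn fun i => b i ^ (x.1 i : ℕ)).prod *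
        (List.ofFn fun j => c j ^ (x.2 j : ℕ)).prod := by
    have hl (i : Fin n) : (E x (Fin.castAdd m i) : ℕ) = x.1 i := congrArg Fin.val
      (Equiv.piCongrLeft_sumInl (fun k => Fin (orderOf (d k))) finSumFinEquiv _ _ i)
    have hr (j : Fin m) : (E x (Fin.natAdd n j) : ℕ) = x.2 j := congrArg Fin.val
      (Equiv.piCongrLeft_sumInr (fun k => Fin (orderOf (d k))) finSumFinEquiv _ _ j)
    rw [List.ofFn_add, List.prod_append, SubmonoidClass.coe_list_prod,
      SubmonoidClass.coe_list_prod, List.map_ofFn, List.map_ofFn]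
    congr 3 <;> funext i <;> simp only [Function.comp_apply, SubgroupClass.coe_pow]
    · exact congr_arg₂ (· ^ ·) (Fin.append_left _ _ i) (hl i)
    · exact congr_arg₂ (· ^ ·) (Fin.append_right _ _ i) (hr i)
  refine ⟨n + m, d,
    Fin.addCases (fun i => by simpa [d] using hb1 i) (fun j => by simpa [d] using hc1 j), ?_⟩
  rw [← E.bijective_comp]
  convert hHK.comp (hb.prodMap hc) using 1
  funext x
  exact hE x

end HasGroupBasis

theorem orderOf_eq_prime_of_card_eq_prime_sq {G : Type*} [Group G] [Finite G] {p : ℕ}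
    [Fact p.Prime] (hG : Nat.card G = p ^ 2) (hcyc : ¬ IsCyclic G) {x : G} (hx : x ≠ 1) :
    orderOf x = p := by
  obtain ⟨j, hj, hxj⟩ := (Nat.dvd_prime_pow Fact.out).mp (hG ▸ orderOf_dvd_natCard x)
  interval_cases j
  · exact absurd (orderOf_eq_one_iff.mp hxj) hx
  · exact hxj.trans (pow_one p)
  · exact absurd (isCyclic_of_orderOf_eq_card x (hxj.trans hG.symm)) hcyc

theorem HasGroupBasis.of_card_eq_prime_sq {G : Type*} [Group G] [Finite G] {p : ℕ}
    [Fact p.Prime] (hG : Nat.card G = p ^ 2) : HasGroupBasis G := by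
  by_cases hcyc : IsCyclic G
  · exact of_isCyclic G
  have hord {x : G} (hx : x ≠ 1) := orderOf_eq_prime_of_card_eq_prime_sq hG hcyc hx
  have hnot (g : G) : ∃ y, y ∉ zpowers g := by
    by_contra! h
    exact hcyc ⟨g, h⟩
  obtain ⟨x, hx⟩ := hnot 1
  obtain ⟨y, hy⟩ := hnot x
  replace hx : x ≠ 1 := by simpa using hx
  have hy1 : y ≠ 1 := by rintro rfl; exact hy (zpowers x).one_mem
  -- a nontrivial element of both cyclic subgroups of order `p` would generate both
  have hdisj : Disjoint (zpowers x) (zpowers y) := by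
    refine Subgroup.disjoint_def.mpr fun {z} hzx hzy => by_contra fun hz => hy ?_
    have : zpowers z = zpowers y :=
      eq_of_le_of_card_ge (zpowers_le.mpr hzy) (by simp [hord hz, hord hy1])
    exact zpowers_le.mpr hzx (this ▸ mem_zpowers y)
  refine of_isComplement' (isComplement'_of_card_mul_and_disjoint ?_ hdisj)
    (of_isCyclic _) (of_isCyclic _)
  rw [Nat.card_zpowers, Nat.card_zpowers, hord hx, hord hy1, hG, sq]

theorem isCyclic_or_card_eq_prime_sq_of_card_dvd {G : Type*} [Group G] {p : ℕ} [Fact p.Prime]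
    (hG : Nat.card G ∣ p ^ 2) : IsCyclic G ∨ Nat.card G = p ^ 2 := by
  obtain ⟨k, hk, hGk⟩ := (Nat.dvd_prime_pow Fact.out).mp hG
  interval_cases k
  · exact .inl (isCyclic_of_card_dvd_prime (p := p) (by simp [hGk]))
  · exact .inl (isCyclic_of_prime_card (hGk.trans (pow_one p)))
  · exact .inr hGk

theorem exists_lt_pow_modEq_of_orderOf_mulAut {P : Type*} [Group P] [Finite P] {p q k : ℕ}
    [Fact q.Prime] (hp : p.Prime) (hP : Nat.card P = p ^ k) (σ : MulAut P)
    (hσ : orderOf σ = q) : ∃ j < k, p ^ k ≡ p ^ j [MOD q] := by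
  let S := zpowers σ
  have hS : IsPGroup q S := IsPGroup.of_card (n := 1) (by rw [Nat.card_zpowers, hσ, pow_one])
  let F := FixedPoints.subgroup S P
  obtain ⟨j, hjk, hF⟩ := (Nat.dvd_prime_pow hp).mp (hP ▸ F.card_subgroup_dvd_card)
  refine ⟨j, hjk.lt_of_ne ?_, hP ▸ hF ▸ hS.card_modEq_card_fixedPoints P⟩
  rintro rfl
  have hFtop : F = ⊤ := eq_top_of_card_eq F (hF.trans hP.symm)
  have hσ1 : σ = 1 := MulEquiv.ext fun x =>
    (hFtop ▸ mem_top x : x ∈ F) ⟨σ, mem_zpowers σ⟩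
  exact (Fact.out : q.Prime).one_lt.ne' (hσ ▸ hσ1 ▸ orderOf_one)

theorem orderOf_mulAut_ne_of_card_dvd_prime_sq {P : Type*} [Group P] [Finite P] {p q : ℕ}
    [Fact p.Prime] [Fact q.Prime] (hP : Nat.card P ∣ p ^ 2) (h4 : Nat.card P ≠ 4) (hpq : p < q)
    (σ : MulAut P) : orderOf σ ≠ q := by
  have hp : p.Prime := Fact.out
  have hq : q.Prime := Fact.out
  obtain ⟨k, hk, hPk⟩ := (Nat.dvd_prime_pow hp).mp hP
  intro hσ
  obtain ⟨j, hjk, hmod⟩ := exists_lt_pow_modEq_of_orderOf_mulAut hp hPk σ hσ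
  have hdvd : q ∣ p ^ (k - j) - 1 := by
    have h := (Nat.modEq_iff_dvd' (Nat.pow_le_pow_right hp.pos hjk.le)).mp hmod.symm
    rw [← Nat.sub_add_cancel hjk.le, pow_add, ← Nat.sub_one_mul] at h
    exact (((Nat.coprime_primes hq hp).mpr hpq.ne').pow_right j).dvd_of_dvd_mul_right h
  -- `q > p` cannot divide `p - 1`, so `q ∣ p + 1`, forcing `q = p + 1`, `p = 2` and `|P| = 4`
  have hq1 : ¬ q ∣ p - 1 := fun h =>
    hpq.not_ge ((Nat.le_of_dvd (Nat.sub_pos_of_lt hp.one_lt) h).trans (Nat.sub_le p 1))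
  obtain hd | hd : k - j = 1 ∨ k - j = 2 := by omega
  · exact hq1 (by simpa [hd] using hdvd)
  · have hqp : q = p + 1 := by
      rw [hd, ← one_pow 2, Nat.sq_sub_sq, hq.dvd_mul] at hdvd
      have := Nat.le_of_dvd (by omega) (hdvd.resolve_right hq1)
      omega
    have hp2 : p = 2 := by
      rcases Nat.even_or_odd p with he | ho
      · exact (hp.even_iff).mp he
      · have : q = 2 := hq.even_iff.mp (hqp ▸ ho.add_one)
        have := hp.two_le
        omega
    exact h4 (by rw [hPk, hp2, show k = 2 by omega]; rfl)

theorem Sylow.normalizer_le_centralizer_of_minFac {G : Type*} [Group G] [Finite G] {p : ℕ}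
    [Fact p.Prime] (hp : (Nat.card G).minFac = p) (P : Sylow p G) [IsMulCommutative P]
    (hP : ∀ q : ℕ, q.Prime → p < q → ∀ σ : MulAut P, orderOf σ ≠ q) :
    normalizer (P : Subgroup G) ≤ centralizer (P : Set G) := by
  set r := (centralizer (P : Set G)).relIndex (normalizer (P : Subgroup G))
  have hr_aut : r ∣ Nat.card (MulAut P) := by
    have key := card_dvd_of_injective _ (QuotientGroup.kerLift_injective P.normalizerMonoidHom)
    rwa [normalizerMonoidHom_ker, ← index, ← relIndex] at key
  have hr_p : ¬ p ∣ r := fun h => P.not_dvd_index <| h.trans <|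
    (relIndex_dvd_of_le_left _ P.le_centralizer).trans (relIndex_dvd_index_of_le P.le_normalizer)
  have hr_G : r ∣ Nat.card G := (relIndex_dvd_card _ _).trans (card_subgroup_dvd_card _)
  refine relIndex_eq_one.mp (by_contra fun hr => ?_)
  have hq : r.minFac.Prime := Nat.minFac_prime hr
  have hpq : p < r.minFac := lt_of_le_of_ne
    (hp ▸ Nat.minFac_le_of_dvd hq.two_le ((Nat.minFac_dvd r).trans hr_G))
    (fun h => hr_p (h ▸ Nat.minFac_dvd r))
  obtain ⟨σ, hσ⟩ := exists_prime_orderOf_dvd_card' (G := MulAut P) (hp := ⟨hq⟩) _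
    ((Nat.minFac_dvd r).trans hr_aut)
  exact hP _ hq hpq σ hσ

theorem hasGroupBasis_of_not_four_dvd_of_cubeFree {G : Type*} [Group G] [Finite G]
    (h4 : ¬ 4 ∣ Nat.card G) (hcf : ∀ p : ℕ, p.Prime → ¬ p ^ 3 ∣ Nat.card G) :
    HasGroupBasis G := by
  induction hn : Nat.card G using Nat.strong_induction_on generalizing G with
  | _ n ih =>
  subst hn
  rcases subsingleton_or_nontrivial G with _ | _
  · exact HasGroupBasis.of_subsingleton G
  set p := (Nat.card G).minFac with hp
  have : Fact p.Prime := ⟨Nat.minFac_prime Finite.one_lt_card.ne'⟩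
  obtain ⟨P⟩ : Nonempty (Sylow p G) := inferInstance
  have hPG : Nat.card P ∣ Nat.card G := card_subgroup_dvd_card _
  have hP2 : Nat.card P ∣ p ^ 2 := by
    obtain ⟨k, hk⟩ := P.2.exists_card_eq
    refine hk ▸ pow_dvd_pow p (not_lt.mp fun h3 => hcf p Fact.out ?_)
    exact (pow_dvd_pow p h3).trans (hk ▸ hPG)
  have hP4 : Nat.card P ≠ 4 := fun h => h4 (h ▸ hPG)
  have : IsMulCommutative P := (isCyclic_or_card_eq_prime_sq_of_card_dvd hP2).elim
    (fun _ => inferInstance) IsPGroup.isMulCommutative_of_card_eq_prime_sq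
  have hPbasis : HasGroupBasis P := (isCyclic_or_card_eq_prime_sq_of_card_dvd hP2).elim
    (fun _ => .of_isCyclic P) HasGroupBasis.of_card_eq_prime_sq
  have hNC := P.normalizer_le_centralizer_of_minFac hp.symm fun q hq hpq =>
    have : Fact q.Prime := ⟨hq⟩
    orderOf_mulAut_ne_of_card_dvd_prime_sq hP2 hP4 hpq
  -- Burnside: `P` has a normal complement `K`, to which the induction hypothesis applies
  set K := (MonoidHom.transferSylow P hNC).ker
  have hKG : Nat.card K ∣ Nat.card G := card_subgroup_dvd_card K
  have hKlt : Nat.card K < Nat.card G := (Nat.le_of_dvd Nat.card_pos hKG).lt_of_ne fun h =>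
    MonoidHom.not_dvd_card_ker_transferSylow P hNC (h ▸ Nat.minFac_dvd _)
  exact .of_isComplement' (MonoidHom.ker_transferSylow_isComplement' P hNC)
    (ih _ hKlt (fun h => h4 (h.trans hKG)) (fun q hq h => hcf q hq (h.trans hKG)) rfl) hPbasis

theorem hasGroupBasis_of_card_two_mul_odd_cubeFree_general {G : Type*} [Group G] [Finite G]
    (m : ℕ) (hodd : Odd m) (hcf : ∀ p : ℕ, p.Prime → ¬ p ^ 3 ∣ m)
    (hcard : Nat.card G = 2 * m) :
    HasGroupBasis G := by
  obtain ⟨s, rfl⟩ := hodd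
  have h4 : ¬ 4 ∣ Nat.card G := by
    rw [hcard]
    omega
  refine hasGroupBasis_of_not_four_dvd_of_cubeFree h4 fun q hq hdvd => ?_
  rcases eq_or_ne q 2 with rfl | hq2
  · exact h4 ((by norm_num : 4 ∣ 2 ^ 3).trans hdvd)
  · have hcop : (q ^ 3).Coprime 2 := ((Nat.coprime_primes hq Nat.prime_two).mpr hq2).pow_left 3
    exact hcf q hq (hcop.dvd_of_dvd_mul_left (hcard ▸ hdvd))

/-- If `m` is an odd cube-free positive integer and `G` is a finite group of order `2m`,
then `G` has a basis. -/
theorem hasGroupBasis_of_card_two_mul_odd_cubeFree {G : Type*} [Group G] [Finite G]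
    (m : ℕ) (hm : 0 < m) (hodd : Odd m) (hcf : ∀ p : ℕ, p.Prime → ¬ p ^ 3 ∣ m)
    (hcard : Nat.card G = 2 * m) :
    HasGroupBasis G :=
  hasGroupBasis_of_card_two_mul_odd_cubeFree_general m hodd hcf hcard
end

section
/- There exists a finite group G of order 16 that has a basis and that contains a normal subgroup isomorphic to the quaternion group Q8. (Hence a group with a basisless normal subgroup can itself have a basis.) -/
open Subgroup

theorem isGroupBasis_pair {G : Type*} [Group G] {x y : G} (hx : x ≠ 1) (hy : y ≠ 1)
    (hxf : IsOfFinOrder x) (hyf : IsOfFinOrder y)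
    (h : (zpowers x).IsComplement' (zpowers y)) : IsGroupBasis ![x, y] := by
  refine ⟨Fin.forall_fin_two.2 ⟨hx, hy⟩, ?_⟩
  have hfactor : (fun a : ∀ i, Fin (orderOf (![x, y] i)) =>
      (List.ofFn fun i => ![x, y] i ^ ((a i : ℕ))).prod) =
      (fun p : zpowers x × zpowers y => (p.1 : G) * p.2) ∘
        Prod.map (finEquivZPowers hxf) (finEquivZPowers hyf) ∘ piFinTwoEquiv _ := by
    funext a
    simp only [List.ofFn_succ, List.ofFn_zero, List.prod_cons, List.prod_nil, mul_one]
    rfl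
  rw [hfactor]
  exact h.comp ((Equiv.prodCongr _ _).bijective.comp (piFinTwoEquiv _).bijective)

theorem disjoint_zpowers_of_prime_orderOf {G : Type*} [Group G] {x y : G}
    (hy : (orderOf y).Prime) (h : y ∉ zpowers x) : Disjoint (zpowers x) (zpowers y) := by
  have : Finite (zpowers y) := .of_equiv _ (finEquivZPowers (orderOf_pos_iff.1 hy.pos))
  have hdvd : Nat.card ↥(zpowers x ⊓ zpowers y) ∣ orderOf y :=
    Nat.card_zpowers y ▸ card_dvd_of_le inf_le_right
  rw [disjoint_iff]
  rcases hy.eq_one_or_self_of_dvd _ hdvd with h1 | hp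
  · exact card_eq_one.1 h1
  · have hinf : zpowers x ⊓ zpowers y = zpowers y :=
      eq_of_le_of_card_ge inf_le_right (by rw [hp, Nat.card_zpowers])
    exact absurd (hinf.ge (mem_zpowers y)).1 h

def zmodPowersHom {M : Type*} [Monoid M] (n : ℕ) [NeZero n] (m : M) (hm : m ^ n = 1) :
    Multiplicative (ZMod n) →* M where
  toFun k := m ^ (Multiplicative.toAdd k).val
  map_one' := by simp
  map_mul' k l := by
    change m ^ (k.toAdd + l.toAdd).val = m ^ k.toAdd.val * m ^ l.toAdd.val
    rw [ZMod.val_add, ← pow_eq_pow_mod _ hm, pow_add]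

namespace SemidirectProduct

variable {N G : Type*} [Group N] [Group G]

instance [Finite N] [Finite G] (φ : G →* MulAut N) : Finite (N ⋊[φ] G) :=
  .of_equiv _ equivProd.symm

theorem exists_normal_mulEquiv_left (φ : G →* MulAut N) :
    ∃ K : Subgroup (N ⋊[φ] G), K.Normal ∧ Nonempty (K ≃* N) :=
  ⟨inl.range, range_inl_eq_ker_rightHom (φ := φ) ▸ rightHom.normal_ker,
    ⟨(MonoidHom.ofInjective inl_injective).symm⟩⟩

end SemidirectProduct

namespace QuaternionGroup

/-- With `i = a 1` and `j = xa 0`, this is the automorphism `i ↦ i⁻¹`, `j ↦ i * j`. -/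
def involution : QuaternionGroup 2 → QuaternionGroup 2
  | a k => a (-k)
  | xa k => xa (-1 - k)

theorem involution_involutive : Function.Involutive involution := by
  unfold Function.Involutive; decide

def involutionAut : MulAut (QuaternionGroup 2) :=
  MulEquiv.mk' involution_involutive.toPerm (by decide)

theorem involutionAut_sq : involutionAut ^ 2 = 1 :=
  MulEquiv.ext involution_involutive

end QuaternionGroup

open QuaternionGroup

abbrev SD16 : Type :=
  QuaternionGroup 2 ⋊[zmodPowersHom 2 involutionAut involutionAut_sq] Multiplicative (ZMod 2)

namespace SD16

def r : SD16 := ⟨xa 0, .ofAdd 1⟩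

def s : SD16 := ⟨1, .ofAdd 1⟩

theorem card : Nat.card SD16 = 16 := by
  simp [SemidirectProduct.card, Nat.card_eq_fintype_card, QuaternionGroup.card]

theorem orderOf_r : orderOf r = 8 :=
  orderOf_eq_prime_pow (p := 2) (n := 2) (by decide) (by decide)

theorem orderOf_s : orderOf s = 2 :=
  orderOf_eq_prime (by decide) (by decide)

theorem s_not_mem_zpowers_r : s ∉ zpowers r := by
  rw [(isOfFinOrder_of_finite r).mem_zpowers_iff_mem_range_orderOf, orderOf_r]
  decide

theorem isGroupBasis_r_s : IsGroupBasis ![r, s] :=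
  isGroupBasis_pair (by decide) (by decide) (isOfFinOrder_of_finite r) (isOfFinOrder_of_finite s)
    (isComplement'_of_card_mul_and_disjoint
      (by rw [Nat.card_zpowers, Nat.card_zpowers, orderOf_r, orderOf_s, card])
      (disjoint_zpowers_of_prime_orderOf (orderOf_s.symm ▸ Nat.prime_two) s_not_mem_zpowers_r))

end SD16

/-- There is a finite group of order `16` that has a basis and contains a normal
subgroup isomorphic to the quaternion group `Q₈`. -/
theorem exists_hasGroupBasis_with_normal_quaternion_subgroup :
    ∃ (G : Type) (_ : Group G) (_ : Finite G),
      Nat.card G = 16 ∧ HasGroupBasis G ∧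
        ∃ N : Subgroup G, N.Normal ∧ Nonempty (N ≃* QuaternionGroup 2) :=
  ⟨SD16, inferInstance, inferInstance, SD16.card, ⟨2, ![SD16.r, SD16.s], SD16.isGroupBasis_r_s⟩,
    SemidirectProduct.exists_normal_mulEquiv_left _⟩
end

section
/- For every integer n ≥ 2, the symmetric group S_n has a basis; in fact the sequence of cycles ((1,2), (1,2,3), …, (1,2,…,n)) is a basis for S_n, i.e., every permutation σ ∈ S_n is uniquely expressible as σ = (1,2)^{a_2} (1,2,3)^{a_3} ··· (1,2,…,n)^{a_n} with a_k ∈ {0,…,k−1}. -/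
open Equiv Equiv.Perm MulAction Subgroup

section Stabilizer

variable {G α : Type*} [Group G] [MulAction G α]

theorem eq_of_prod_ofFn_eq_of_stabilizer {m : ℕ} (H : Fin m → Subgroup G) (p : Fin m → α)
    (hstab : ∀ i j, j < i → H j ≤ stabilizer G (p i))
    (hfree : ∀ i, H i ⊓ stabilizer G (p i) = ⊥)
    {g g' : Fin m → G} (hg : ∀ i, g i ∈ H i) (hg' : ∀ i, g' i ∈ H i)
    (h : (List.ofFn g).prod = (List.ofFn g').prod) : g = g' := by
  induction m with
  | zero => exact Subsingleton.elim _ _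
  | succ m ih =>
    have hprefix : ∀ f : Fin (m + 1) → G, (∀ i, f i ∈ H i) →
        (List.ofFn fun i => f i.castSucc).prod ∈ stabilizer G (p (Fin.last m)) := by
      refine fun f hf => Subgroup.list_prod_mem _ fun x hx => ?_
      obtain ⟨i, rfl⟩ := List.mem_ofFn.1 hx
      exact hstab _ _ (Fin.castSucc_lt_last i) (hf _)
    rw [List.ofFn_succ', List.ofFn_succ', List.prod_concat, List.prod_concat] at h
    set P := (List.ofFn fun i => g i.castSucc).prod
    set P' := (List.ofFn fun i => g' i.castSucc).prod
    have hquot : P'⁻¹ * P = g' (Fin.last m) * (g (Fin.last m))⁻¹ := by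
      rw [eq_mul_inv_of_mul_eq h]; group
    have hlast : g (Fin.last m) = g' (Fin.last m) := by
      refine (mul_inv_eq_one.1 (mem_bot.1 ?_)).symm
      rw [← hfree]
      exact mem_inf.2 ⟨mul_mem (hg' _) (inv_mem (hg _)),
        hquot ▸ mul_mem (inv_mem (hprefix g' hg')) (hprefix g hg)⟩
    have hprefix_eq : (fun i : Fin m => g i.castSucc) = fun i => g' i.castSucc := by
      refine ih (fun i => H i.castSucc) (fun i => p i.castSucc)
        (fun i j hji => hstab _ _ hji) (fun i => hfree _) (fun i => hg _) (fun i => hg' _) ?_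
      rw [hlast] at h
      exact mul_right_cancel h
    funext i
    induction i using Fin.lastCases with
    | last => exact hlast
    | cast i => exact congrFun hprefix_eq i

theorem isGroupBasis_of_stabilizer [Finite G] {m : ℕ} (b : Fin m → G) (p : Fin m → α)
    (hb : ∀ i, b i ≠ 1) (hstab : ∀ i j, j < i → b j ∈ stabilizer G (p i))
    (hfree : ∀ i, zpowers (b i) ⊓ stabilizer G (p i) = ⊥)
    (hcard : ∏ i, orderOf (b i) = Nat.card G) : IsGroupBasis b := by
  refine ⟨hb, Function.Injective.bijective_of_nat_card_le (fun a a' h => ?_) ?_⟩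
  · have hpow := eq_of_prod_ofFn_eq_of_stabilizer (fun i => zpowers (b i)) p
      (fun i j hji => zpowers_le.2 (hstab i j hji)) hfree
      (fun i => npow_mem_zpowers _ _) (fun i => npow_mem_zpowers _ _) h
    funext i
    exact Fin.ext (pow_injOn_Iio_orderOf (a i).isLt (a' i).isLt (congrFun hpow i))
  · simp [hcard]

end Stabilizer

theorem Equiv.Perm.IsCycle.zpowers_inf_stabilizer_eq_bot {β : Type*} [Finite β] {f : Perm β}
    (hf : IsCycle f) {x : β} (hx : f x ≠ x) : zpowers f ⊓ stabilizer (Perm β) x = ⊥ := by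
  refine eq_bot_iff.2 fun g hg => ?_
  obtain ⟨hgf, hgx⟩ := mem_inf.1 hg
  obtain ⟨k, rfl⟩ := mem_powers_iff_mem_zpowers.2 hgf
  exact (hf.pow_eq_one_iff' hx).2 hgx

namespace Fin

theorem formPerm_map_castLE_finRange {n k : ℕ} (h : k + 1 ≤ n) :
    ((List.finRange (k + 1)).map (castLE h)).formPerm = cycleRange ⟨k, h⟩ := by
  have : NeZero n := ⟨by omega⟩
  set l := (List.finRange (k + 1)).map (castLE h)
  have hnd : l.Nodup := (List.nodup_finRange _).map (castLE_injective h)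
  have hlen : l.length = k + 1 := by simp [l]
  have hl : ∀ (j : ℕ) (hj : j < l.length), l[j] = ⟨j, by omega⟩ := by
    intro j hj; ext; simp [l]
  ext ⟨j, hj⟩
  rcases lt_or_ge k j with hkj | hjk
  · rw [List.formPerm_apply_of_notMem, cycleRange_of_gt (by simpa)]
    simp only [l, List.mem_map, not_exists, not_and]
    intro x _ hx
    have : (x : ℕ) = j := congrArg Fin.val hx
    omega
  · have hjl : j < l.length := by omega
    rw [← hl j hjl, List.formPerm_apply_getElem _ hnd, hl, hl, cycleRange_apply]
    simp only [hlen, mk_lt_mk, mk.injEq]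
    split_ifs with hlt heq
    · simp [val_add, Nat.mod_eq_of_lt, hlt, (by omega : j + 1 < n)]
    · simp [heq]
    · omega

theorem orderOf_cycleRange {n : ℕ} (i : Fin n) : orderOf (cycleRange i) = i + 1 := by
  have : NeZero n := ⟨i.pos.ne'⟩
  rcases eq_or_ne i 0 with rfl | hi
  · simp
  · rw [← lcm_cycleType, cycleType_cycleRange hi, Multiset.lcm_singleton, normalize_eq]

theorem prod_val_add_two_eq_factorial (n : ℕ) :
    ∏ i : Fin (n - 1), ((i : ℕ) + 2) = n.factorial := by
  rcases n with _ | n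
  · rfl
  · rw [prod_univ_eq_prod_range (· + 2), ← Finset.prod_range_add_one_eq_factorial,
      Finset.prod_range_succ']
    simp

theorem isGroupBasis_cycleRange (n : ℕ) :
    IsGroupBasis fun i : Fin (n - 1) => cycleRange (⟨i + 1, by omega⟩ : Fin n) := by
  refine isGroupBasis_of_stabilizer _ (fun i : Fin (n - 1) => (⟨i + 1, by omega⟩ : Fin n))
    (fun i => ?_) (fun i j hji => ?_) (fun i => ?_) ?_
  · have : NeZero n := ⟨by have := i.isLt; omega⟩
    exact (isCycle_cycleRange (by simp [Fin.ext_iff])).ne_one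
  · exact cycleRange_of_gt (mk_lt_mk.2 (by simpa using hji))
  · have : NeZero n := ⟨by have := i.isLt; omega⟩
    refine (isCycle_cycleRange (by simp [Fin.ext_iff])).zpowers_inf_stabilizer_eq_bot ?_
    simp [Fin.ext_iff]
  · simp only [orderOf_cycleRange, Nat.card_perm, Nat.card_fin]
    exact prod_val_add_two_eq_factorial n

end Fin

/-- For `n ≥ 2`, the sequence of cycles `((0 1), (0 1 2), …, (0 1 ⋯ n-1))` is a
basis for the symmetric group on `Fin n`: every permutation is uniquely a product
`(0 1)^{a_2} (0 1 2)^{a_3} ⋯ (0 1 ⋯ n-1)^{a_n}` with `a_k ∈ {0, …, k-1}`. -/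
theorem isGroupBasis_cycles_perm (n : ℕ) :
    IsGroupBasis (fun i : Fin (n - 1) =>
      (((List.finRange (i.1 + 2)).map
        (Fin.castLE (by have := i.isLt; omega))).formPerm : Equiv.Perm (Fin n))) := by
  simp only [Fin.formPerm_map_castLE_finRange]
  exact Fin.isGroupBasis_cycleRange n
end
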